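/- Let (S_t) be a path of symplectic matrices with blocks S_t = [[A_t, B_t], [C_t, D_t]], z_t = (x_t, p_t) a path in ℝ^{2n}, and ε > 0. The orthogonal projection onto ℝⁿ × {0} of the ellipsoid T(z_t) S_t B(ε) (the image of the ball of radius ε under S_t followed by translation by z_t) equals the translate by x_t of the ellipsoid (A_t A_tᵀ + B_t B_tᵀ)^{1/2} Bⁿ(ε), i.e. {x : (A_t A_tᵀ + B_t B_tᵀ)⁻¹(x - x_t)·(x - x_t) ≤ ε²}. -/

import Mathlib

/-!
The shadow is the image of the ball under the top block row `M = (A B)` of `S`, translated by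
`x_t`, and `M Mᵀ = A Aᵀ + B Bᵀ`. Since `S` is symplectic it is invertible, so the rows of `M` are
independent and `M Mᵀ` is invertible. For such `M`, the vector `Mᵀ (M Mᵀ)⁻¹ y` is the
minimum-norm preimage of `y`: its squared norm is `(M Mᵀ)⁻¹ y ⬝ y`, and every other preimage
differs from it by a vector orthogonal to it. Hence `M` maps the ball `u ⬝ u ≤ r` onto the
ellipsoid `(M Mᵀ)⁻¹ y ⬝ y ≤ r`.
-/

open Matrix

noncomputable def J (n : ℕ) : Matrix (Fin n ⊕ Fin n) (Fin n ⊕ Fin n) ℝ :=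
  fromBlocks 0 1 (-1) 0

namespace Matrix

variable {m k : Type*} [Fintype m] [Fintype k]

theorem dotProduct_self_le_of_dotProduct_sub_eq_zero {u v : k → ℝ} (h : v ⬝ᵥ (u - v) = 0) :
    v ⬝ᵥ v ≤ u ⬝ᵥ u := by
  have hsplit : u ⬝ᵥ u = v ⬝ᵥ v + (u - v) ⬝ᵥ (u - v) := by
    rw [sub_dotProduct, dotProduct_sub, dotProduct_sub, dotProduct_comm u v] at *
    linarith
  have hnonneg : 0 ≤ (u - v) ⬝ᵥ (u - v) := by simpa using dotProduct_star_self_nonneg (u - v)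
  linarith

section Ellipsoid

variable [DecidableEq m] (M : Matrix m k ℝ)

theorem mulVec_transpose_mulVec_inv_mul_transpose (hM : IsUnit (M * Mᵀ).det) (y : m → ℝ) :
    M *ᵥ (Mᵀ *ᵥ ((M * Mᵀ)⁻¹ *ᵥ y)) = y := by
  rw [mulVec_mulVec, mulVec_mulVec, mul_nonsing_inv _ hM, one_mulVec]

theorem dotProduct_self_transpose_mulVec_inv_mul_transpose (hM : IsUnit (M * Mᵀ).det)
    (y : m → ℝ) :
    (Mᵀ *ᵥ ((M * Mᵀ)⁻¹ *ᵥ y)) ⬝ᵥ (Mᵀ *ᵥ ((M * Mᵀ)⁻¹ *ᵥ y)) = ((M * Mᵀ)⁻¹ *ᵥ y) ⬝ᵥ y := by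
  rw [dotProduct_mulVec, vecMul_transpose, mulVec_transpose_mulVec_inv_mul_transpose M hM,
    dotProduct_comm]

theorem inv_mul_transpose_mulVec_dotProduct_le (hM : IsUnit (M * Mᵀ).det) (u : k → ℝ) :
    ((M * Mᵀ)⁻¹ *ᵥ (M *ᵥ u)) ⬝ᵥ (M *ᵥ u) ≤ u ⬝ᵥ u := by
  rw [← dotProduct_self_transpose_mulVec_inv_mul_transpose M hM]
  apply dotProduct_self_le_of_dotProduct_sub_eq_zero
  rw [dotProduct_comm, dotProduct_mulVec, vecMul_transpose, mulVec_sub,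
    mulVec_transpose_mulVec_inv_mul_transpose M hM, sub_self, zero_dotProduct]

theorem image_mulVec_dotProduct_self_le (hM : IsUnit (M * Mᵀ).det) (r : ℝ) :
    M.mulVec '' {u | u ⬝ᵥ u ≤ r} = {y | ((M * Mᵀ)⁻¹ *ᵥ y) ⬝ᵥ y ≤ r} := by
  ext y
  constructor
  · rintro ⟨u, hu, rfl⟩
    exact (inv_mul_transpose_mulVec_dotProduct_le M hM u).trans hu
  · intro hy
    refine ⟨Mᵀ *ᵥ ((M * Mᵀ)⁻¹ *ᵥ y), ?_, mulVec_transpose_mulVec_inv_mul_transpose M hM y⟩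
    simpa only [Set.mem_ofPred_eq, dotProduct_self_transpose_mulVec_inv_mul_transpose M hM]

end Ellipsoid

theorem posDef_mul_transpose_of_linearIndependent_row {M : Matrix m k ℝ}
    (hM : LinearIndependent ℝ M.row) : (M * Mᵀ).PosDef := by
  simpa using PosDef.mul_conjTranspose_self M (vecMul_injective_iff.2 hM)

theorem isUnit_det_fromCols_mul_transpose {m' : Type*} [Fintype m'] [DecidableEq m]
    [DecidableEq m']
    {A : Matrix m m ℝ} {B : Matrix m m' ℝ} {C : Matrix m' m ℝ} {D : Matrix m' m' ℝ}
    (hS : IsUnit (fromBlocks A B C D).det) : IsUnit (fromCols A B * (fromCols A B)ᵀ).det := by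
  have hrows : LinearIndependent ℝ (fromBlocks A B C D).row :=
    linearIndependent_rows_of_isUnit ((isUnit_iff_isUnit_det _).2 hS)
  rw [← fromRows_fromCols_eq_fromBlocks] at hrows
  exact (isUnit_iff_isUnit_det _).1
    (posDef_mul_transpose_of_linearIndependent_row (hrows.comp Sum.inl Sum.inl_injective)).isUnit

end Matrix

theorem J_eq_neg (n : ℕ) : J n = -Matrix.J (Fin n) ℝ := by
  simp [_root_.J, Matrix.J, fromBlocks_neg]

theorem isUnit_det_of_transpose_mul_J_mul_eq {n : ℕ}
    {S : Matrix (Fin n ⊕ Fin n) (Fin n ⊕ Fin n) ℝ} (hS : Sᵀ * J n * S = J n) : IsUnit S.det := by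
  refine SymplecticGroup.symplectic_det (SymplecticGroup.mem_iff'.2 ?_)
  simpa [J_eq_neg] using hS

theorem chalkboard_shadow_general {n : ℕ} (A B C D : Matrix (Fin n) (Fin n) ℝ)
    (hsymp : (fromBlocks A B C D)ᵀ * J n * fromBlocks A B C D = J n)
    (z : Fin n ⊕ Fin n → ℝ) (ε : ℝ) :
    (fun w : Fin n ⊕ Fin n → ℝ => w ∘ Sum.inl) ''
        ((fun u => fromBlocks A B C D *ᵥ u + z) ''
          {u : Fin n ⊕ Fin n → ℝ | u ⬝ᵥ u ≤ ε ^ 2}) =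
      {x : Fin n → ℝ |
        ((A * Aᵀ + B * Bᵀ)⁻¹ *ᵥ (x - z ∘ Sum.inl)) ⬝ᵥ (x - z ∘ Sum.inl) ≤ ε ^ 2} := by
  have hgram : fromCols A B * (fromCols A B)ᵀ = A * Aᵀ + B * Bᵀ := by
    rw [transpose_fromCols, fromCols_mul_fromRows]
  have hunit := isUnit_det_fromCols_mul_transpose (isUnit_det_of_transpose_mul_J_mul_eq hsymp)
  have hproj (u : Fin n ⊕ Fin n → ℝ) :
      (fromBlocks A B C D *ᵥ u + z) ∘ Sum.inl = fromCols A B *ᵥ u + z ∘ Sum.inl := by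
    rw [← fromRows_fromCols_eq_fromBlocks, fromRows_mulVec, Pi.add_comp, Sum.elim_comp_inl]
  calc _ = (· + z ∘ Sum.inl) '' ((fromCols A B).mulVec '' {u | u ⬝ᵥ u ≤ ε ^ 2}) := by
        simp only [Set.image_image, hproj]
    _ = _ := by
        rw [image_mulVec_dotProduct_self_le _ hunit, hgram, Set.image_add_right]
        rfl

theorem chalkboard_shadow {n : ℕ} (A B C D : Matrix (Fin n) (Fin n) ℝ)
    (hsymp : (fromBlocks A B C D)ᵀ * J n * fromBlocks A B C D = J n)
    (z : Fin n ⊕ Fin n → ℝ) (ε : ℝ) (hε : 0 < ε) :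
    (fun w : Fin n ⊕ Fin n → ℝ => w ∘ Sum.inl) ''
        ((fun u => fromBlocks A B C D *ᵥ u + z) ''
          {u : Fin n ⊕ Fin n → ℝ | u ⬝ᵥ u ≤ ε ^ 2}) =
      {x : Fin n → ℝ |
        ((A * Aᵀ + B * Bᵀ)⁻¹ *ᵥ (x - z ∘ Sum.inl)) ⬝ᵥ (x - z ∘ Sum.inl) ≤ ε ^ 2} :=
  chalkboard_shadow_general A B C D hsymp z ε
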